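/- arXiv:1202.6313 — 3 statements merged into one kernel-verified Lean document; each statement's English description precedes it below -/
import Mathlib

section
/- Let ψ be a completely multiplicative arithmetic function with values in ℂ, let M be a positive integer, and let x₂ be a nonzero integer. Assume all sums below converge absolutely. Then ∑_{c : M | c} ψ(c) ∑_{d | gcd(c, x₂)} d μ(c/d) = (ψ(M)·M / L^M(ψ)) · ∑_{e | gcd(M, x₂)} μ(M/e) (e/M) σ_{ψ·id}(x₂/e), where L^M(ψ) = ∑_{n ≥ 1, (n,M)=1} ψ(n) is the Dirichlet series of ψ restricted to integers coprime to M, and σ_{ψ·id}(t) = ∑_{d | t} ψ(d) d. -/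
open Complex Finset

open scoped LSeries.notation

namespace Stmt3

noncomputable def bb (ψ : ℕ → ℂ) (M : ℕ) : ℕ → ℂ :=
  fun n => if n ≠ 0 ∧ Nat.Coprime n M then ((ArithmeticFunction.moebius n : ℤ) : ℂ) * ψ n else 0

noncomputable def gg (ψ : ℕ → ℂ) (M : ℕ) : ℕ → ℂ :=
  fun n => if n ≠ 0 ∧ Nat.Coprime n M then ψ n else 0

noncomputable def rr (ψ : ℕ → ℂ) (M x : ℕ) : ℕ → ℂ :=
  fun m => ∑ e ∈ (Nat.gcd M x).divisors.filter (fun e => M ∣ m ∧ e * (m / M) ∣ x),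
    ψ m * ((m / M : ℕ) : ℂ) * (e : ℂ) * ((ArithmeticFunction.moebius (M / e) : ℤ) : ℂ)

noncomputable def aa (ψ : ℕ → ℂ) (M x : ℕ) : ℕ → ℂ :=
  fun n => if M ∣ n ∧ n ≠ 0 then
    ψ n * ∑ d ∈ (Nat.gcd n x).divisors,
      (d : ℂ) * ((ArithmeticFunction.moebius (n / d) : ℤ) : ℂ)
  else 0

lemma term_zero_eq (f : ℕ → ℂ) (hf : f 0 = 0) : LSeries.term f 0 = f := by
  funext n
  rcases eq_or_ne n 0 with rfl | hn
  · simpa using hf.symm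
  · rw [LSeries.term_of_ne_zero hn, cpow_zero, div_one]

lemma LSeries_at_zero (f : ℕ → ℂ) (hf : f 0 = 0) : LSeries f 0 = ∑' n, f n := by
  rw [LSeries, term_zero_eq f hf]

lemma summable_norm_bb (ψ : ℕ → ℂ) (habs : Summable fun n : ℕ => ‖ψ n‖) (M : ℕ) :
    Summable fun n => ‖bb ψ M n‖ := by
  refine habs.of_nonneg_of_le (fun n => norm_nonneg _) (fun n => ?_)
  rw [bb]
  split_ifs with h
  · rw [norm_mul]
    have h1 : ‖((ArithmeticFunction.moebius n : ℤ) : ℂ)‖ ≤ 1 := by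
      rw [Complex.norm_intCast]
      exact_mod_cast ArithmeticFunction.abs_moebius_le_one
    calc ‖((ArithmeticFunction.moebius n : ℤ) : ℂ)‖ * ‖ψ n‖ ≤ 1 * ‖ψ n‖ :=
          mul_le_mul_of_nonneg_right h1 (norm_nonneg _)
      _ = ‖ψ n‖ := one_mul _
  · simpa using norm_nonneg _

lemma summable_norm_gg (ψ : ℕ → ℂ) (habs : Summable fun n : ℕ => ‖ψ n‖) (M : ℕ) :
    Summable fun n => ‖gg ψ M n‖ := by
  refine habs.of_nonneg_of_le (fun n => norm_nonneg _) (fun n => ?_)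
  rw [gg]
  split_ifs with h
  · exact le_rfl
  · simpa using norm_nonneg _

lemma bb_zero (ψ : ℕ → ℂ) (M : ℕ) : bb ψ M 0 = 0 := by simp [bb]

lemma gg_zero (ψ : ℕ → ℂ) (M : ℕ) : gg ψ M 0 = 0 := by simp [gg]

lemma rr_zero (ψ : ℕ → ℂ) (M x : ℕ) (hx : x ≠ 0) : rr ψ M x 0 = 0 := by
  rw [rr]
  refine Finset.sum_eq_zero fun e he => ?_
  rcases Finset.mem_filter.mp he with ⟨-, -, h2⟩
  simp only [Nat.zero_div, mul_zero] at h2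
  exact absurd (zero_dvd_iff.mp h2) hx

lemma LSeriesSummable_bb (ψ : ℕ → ℂ) (habs : Summable fun n : ℕ => ‖ψ n‖) (M : ℕ) :
    LSeriesSummable (bb ψ M) 0 := by
  rw [LSeriesSummable, term_zero_eq _ (bb_zero ψ M)]
  exact (summable_norm_bb ψ habs M).of_norm

lemma LSeriesSummable_gg (ψ : ℕ → ℂ) (habs : Summable fun n : ℕ => ‖ψ n‖) (M : ℕ) :
    LSeriesSummable (gg ψ M) 0 := by
  rw [LSeriesSummable, term_zero_eq _ (gg_zero ψ M)]
  exact (summable_norm_gg ψ habs M).of_norm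

lemma rr_support (ψ : ℕ → ℂ) (M x : ℕ) (hM : M ≠ 0) (hx : x ≠ 0) :
    ∀ m ∉ x.divisors.image (M * ·), rr ψ M x m = 0 := by
  intro m hm
  rw [rr]
  refine Finset.sum_eq_zero fun e he => ?_
  rcases Finset.mem_filter.mp he with ⟨-, h1, h2⟩
  exfalso
  apply hm
  refine Finset.mem_image.mpr ⟨m / M, Nat.mem_divisors.mpr ⟨dvd_trans (dvd_mul_left _ e) h2, hx⟩, ?_⟩
  exact (Nat.mul_div_cancel' h1)

lemma LSeriesSummable_rr (ψ : ℕ → ℂ) (M x : ℕ) (hM : M ≠ 0) (hx : x ≠ 0) :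
    LSeriesSummable (rr ψ M x) 0 := by
  rw [LSeriesSummable, term_zero_eq _ (rr_zero ψ M x hx)]
  exact summable_of_ne_finset_zero (rr_support ψ M x hM hx)


lemma sum_moebius_fst (n : ℕ) :
    (∑ p ∈ n.divisorsAntidiagonal, ((ArithmeticFunction.moebius p.1 : ℤ) : ℂ))
      = if n = 1 then 1 else 0 := by
  have h := congrArg (fun f : ArithmeticFunction ℤ => f n)
    ArithmeticFunction.moebius_mul_coe_zeta
  simp only [ArithmeticFunction.mul_apply, ArithmeticFunction.one_apply] at h
  have h' : (∑ p ∈ n.divisorsAntidiagonal, (ArithmeticFunction.moebius p.1) : ℤ)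
      = if n = 1 then 1 else 0 := by
    rw [← h]
    refine Finset.sum_congr rfl fun p hp => ?_
    have h2 := (Nat.ne_zero_of_mem_divisorsAntidiagonal hp).2
    simp [ArithmeticFunction.natCoe_apply, ArithmeticFunction.zeta_apply, h2]
  have : (∑ p ∈ n.divisorsAntidiagonal, ((ArithmeticFunction.moebius p.1 : ℤ) : ℂ))
      = (((∑ p ∈ n.divisorsAntidiagonal, (ArithmeticFunction.moebius p.1) : ℤ)) : ℂ) := by
    push_cast; rfl
  rw [this, h']
  split_ifs <;> simp

lemma bg_delta (ψ : ℕ → ℂ) (hψ1 : ψ 1 = 1)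
    (hψm : ∀ m n : ℕ, ψ (m * n) = ψ m * ψ n) (M : ℕ) :
    bb ψ M ⍟ gg ψ M = LSeries.delta := by
  funext n
  rcases eq_or_ne n 0 with rfl | hn
  · simp [LSeries.delta]
  rw [LSeries.convolution_def]
  show (∑ p ∈ n.divisorsAntidiagonal, bb ψ M p.1 * gg ψ M p.2) = LSeries.delta n
  by_cases hcop : Nat.Coprime n M
  · have hterm : ∀ p ∈ n.divisorsAntidiagonal,
        bb ψ M p.1 * gg ψ M p.2 = ψ n * ((ArithmeticFunction.moebius p.1 : ℤ) : ℂ) := by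
      intro p hp
      obtain ⟨hpn, -⟩ := Nat.mem_divisorsAntidiagonal.mp hp
      obtain ⟨h1, h2⟩ := Nat.ne_zero_of_mem_divisorsAntidiagonal hp
      have hc1 : Nat.Coprime p.1 M :=
        Nat.Coprime.coprime_dvd_left (Nat.fst_mem_divisors_of_mem_antidiagonal hp |>
          Nat.mem_divisors.mp |>.1) hcop
      have hc2 : Nat.Coprime p.2 M :=
        Nat.Coprime.coprime_dvd_left (Nat.snd_mem_divisors_of_mem_antidiagonal hp |>
          Nat.mem_divisors.mp |>.1) hcop
      have hb : bb ψ M p.1 = ((ArithmeticFunction.moebius p.1 : ℤ) : ℂ) * ψ p.1 := by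
        simp [bb, h1, hc1]
      have hg : gg ψ M p.2 = ψ p.2 := by simp [gg, h2, hc2]
      rw [hb, hg, ← hpn, hψm p.1 p.2]; ring
    rw [Finset.sum_congr rfl hterm, ← Finset.mul_sum, sum_moebius_fst]
    rcases eq_or_ne n 1 with rfl | hn1
    · simp [LSeries.delta, hψ1]
    · simp [LSeries.delta, hn1]
  · have hterm : ∀ p ∈ n.divisorsAntidiagonal, bb ψ M p.1 * gg ψ M p.2 = 0 := by
      intro p hp
      obtain ⟨hpn, -⟩ := Nat.mem_divisorsAntidiagonal.mp hp
      by_cases hc1 : Nat.Coprime p.1 M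
      · by_cases hc2 : Nat.Coprime p.2 M
        · exact absurd (hpn ▸ Nat.Coprime.mul hc1 hc2) hcop
        · rw [gg, if_neg (by tauto), mul_zero]
      · rw [bb, if_neg (by tauto), zero_mul]
    rw [Finset.sum_congr rfl hterm, Finset.sum_const, smul_zero]
    have : n ≠ 1 := by rintro rfl; exact hcop (Nat.coprime_one_left M)
    simp [LSeries.delta, this]

lemma br_aa (ψ : ℕ → ℂ) (hψm : ∀ m n : ℕ, ψ (m * n) = ψ m * ψ n)
    (M x : ℕ) (hM : M ≠ 0) (hx : x ≠ 0) :
    bb ψ M ⍟ rr ψ M x = aa ψ M x := by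
  classical
  funext n
  rcases eq_or_ne n 0 with rfl | hn
  · simp [aa]
  rw [LSeries.convolution_def]
  show (∑ p ∈ n.divisorsAntidiagonal, bb ψ M p.1 * rr ψ M x p.2) = aa ψ M x n
  by_cases hMn : M ∣ n
  swap
  · rw [aa, if_neg (by tauto)]
    refine Finset.sum_eq_zero fun p hp => ?_
    have h2 : p.2 ∣ n := (Nat.mem_divisors.mp (Nat.snd_mem_divisors_of_mem_antidiagonal hp)).1
    have hz : rr ψ M x p.2 = 0 := by
      simp only [rr]
      refine Finset.sum_eq_zero fun e he => ?_
      rcases Finset.mem_filter.mp he with ⟨-, hMp, -⟩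
      exact absurd (hMp.trans h2) hMn
    rw [hz, mul_zero]
  have haan : aa ψ M x n =
      ∑ d ∈ (Nat.gcd n x).divisors,
        ψ n * ((d : ℂ) * ((ArithmeticFunction.moebius (n / d) : ℤ) : ℂ)) := by
    simp only [aa, if_pos (And.intro hMn hn)]
    rw [Finset.mul_sum]
  rw [haan]
  -- notation
  set μ := ArithmeticFunction.moebius with hμdef
  set T : (Σ _ : ℕ × ℕ, ℕ) → ℂ := fun σ =>
    bb ψ M σ.1.1 * (ψ σ.1.2 * ((σ.1.2 / M : ℕ) : ℂ) * (σ.2 : ℂ) * ((μ (M / σ.2) : ℤ) : ℂ))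
    with hTdef
  set S : ℕ → ℂ := fun d => ψ n * ((d : ℂ) * ((μ (n / d) : ℤ) : ℂ)) with hSdef
  have hflat : (∑ p ∈ n.divisorsAntidiagonal, bb ψ M p.1 * rr ψ M x p.2)
      = ∑ σ ∈ n.divisorsAntidiagonal.sigma
          (fun p => (Nat.gcd M x).divisors.filter (fun e => M ∣ p.2 ∧ e * (p.2 / M) ∣ x)), T σ := by
    rw [Finset.sum_sigma]
    refine Finset.sum_congr rfl fun p _ => ?_
    simp only [rr, Finset.mul_sum, hTdef]
    rfl
  rw [hflat]
  rw [← Finset.sum_filter_ne_zero ((Nat.gcd n x).divisors) (f := S),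
      ← Finset.sum_filter_ne_zero (n.divisorsAntidiagonal.sigma _) (f := T)]
  -- the key term equality, used several times
  have Heq : ∀ i j e : ℕ, i * j = n → i ≠ 0 → Nat.Coprime i M → e ≠ 0 → e ∣ M → M ∣ j →
      T ⟨(i, j), e⟩ = S (e * (j / M)) := by
    intro i j e hij hi0 hci he0 heM hMj
    have hj0 : j ≠ 0 := by rintro rfl; rw [mul_zero] at hij; exact hn hij.symm
    have hjM : M * (j / M) = j := Nat.mul_div_cancel' hMj
    have heM' : e * (M / e) = M := Nat.mul_div_cancel' heM
    have hd0 : e * (j / M) ≠ 0 := by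
      have : j / M ≠ 0 := by
        intro h; rw [h, mul_zero] at hjM; exact hj0 hjM.symm
      positivity
    have hne : n = (e * (j / M)) * (i * (M / e)) := by
      rw [← hij]
      calc i * j = i * (M * (j / M)) := by rw [hjM]
        _ = i * ((e * (M / e)) * (j / M)) := by rw [heM']
        _ = (e * (j / M)) * (i * (M / e)) := by ring
    have hnd : n / (e * (j / M)) = i * (M / e) := by
      rw [hne, Nat.mul_div_cancel_left _ (Nat.pos_of_ne_zero hd0)]
    have hcop2 : Nat.Coprime i (M / e) :=
      Nat.Coprime.coprime_dvd_right (Nat.div_dvd_of_dvd heM) hci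
    have hμmul : μ (n / (e * (j / M))) = μ i * μ (M / e) := by
      rw [hnd]
      exact ArithmeticFunction.isMultiplicative_moebius.map_mul_of_coprime hcop2
    have hbi : bb ψ M i = ((μ i : ℤ) : ℂ) * ψ i := by simp only [bb, if_pos (And.intro hi0 hci), hμdef]
    have hψn : ψ i * ψ j = ψ n := by rw [← hij, hψm i j]
    simp only [hTdef, hSdef, hbi, hμmul, ← hψn]
    push_cast
    ring
  have sigFacts : ∀ σ : (Σ _ : ℕ × ℕ, ℕ),
      σ ∈ Finset.filter (fun σ => T σ ≠ 0) (n.divisorsAntidiagonal.sigma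
        (fun p => (Nat.gcd M x).divisors.filter (fun e => M ∣ p.2 ∧ e * (p.2 / M) ∣ x))) →
      σ.1.1 * σ.1.2 = n ∧ σ.1.1 ≠ 0 ∧ Nat.Coprime σ.1.1 M ∧ σ.2 ≠ 0 ∧ σ.2 ∣ M ∧
        σ.2 * (σ.1.2 / M) ∣ x ∧ M ∣ σ.1.2 ∧ σ.2 * (σ.1.2 / M) ∣ x := by
    intro σ hσ
    obtain ⟨hmem, hT0⟩ := Finset.mem_filter.mp hσ
    obtain ⟨hp, he⟩ := Finset.mem_sigma.mp hmem
    obtain ⟨hij, -⟩ := Nat.mem_divisorsAntidiagonal.mp hp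
    obtain ⟨h1, h2, h3⟩ := Finset.mem_filter.mp he
    have hegcd : σ.2 ∣ Nat.gcd M x := (Nat.mem_divisors.mp h1).1
    have hi0 : σ.1.1 ≠ 0 := (Nat.ne_zero_of_mem_divisorsAntidiagonal hp).1
    have hci : Nat.Coprime σ.1.1 M := by
      by_contra hc
      apply hT0
      have hb0 : bb ψ M σ.1.1 = 0 := by simp [bb, hc]
      simp only [hTdef, hb0, zero_mul]
    have he0 : σ.2 ≠ 0 := Nat.pos_of_mem_divisors h1 |>.ne'
    exact ⟨hij, hi0, hci, he0, hegcd.trans (Nat.gcd_dvd_left M x), h3, h2, h3⟩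
  have dFacts : ∀ d ∈ Finset.filter (fun d => S d ≠ 0) (Nat.gcd n x).divisors,
      (n / d / Nat.gcd (n / d) M) * (n / (n / d / Nat.gcd (n / d) M)) = n ∧
      n / d / Nat.gcd (n / d) M ≠ 0 ∧
      Nat.Coprime (n / d / Nat.gcd (n / d) M) M ∧
      M / Nat.gcd (n / d) M ≠ 0 ∧
      M / Nat.gcd (n / d) M ∣ M ∧
      M / Nat.gcd (n / d) M ∣ x ∧
      M ∣ n / (n / d / Nat.gcd (n / d) M) ∧
      (M / Nat.gcd (n / d) M) * ((n / (n / d / Nat.gcd (n / d) M)) / M) = d := by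
    intro d hd
    obtain ⟨hmem, hS0⟩ := Finset.mem_filter.mp hd
    obtain ⟨hdg, -⟩ := Nat.mem_divisors.mp hmem
    have hdn : d ∣ n := hdg.trans (Nat.gcd_dvd_left n x)
    have hdx : d ∣ x := hdg.trans (Nat.gcd_dvd_right n x)
    have hd0 : d ≠ 0 := by rintro rfl; exact hx (zero_dvd_iff.mp hdx)
    set t := n / d with ht
    set s0 := Nat.gcd t M with hs0
    set u := t / s0 with hu
    set e := M / s0 with he
    have hdt : d * t = n := Nat.mul_div_cancel' hdn
    have ht0 : t ≠ 0 := by rintro h; rw [h, mul_zero] at hdt; exact hn hdt.symm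
    have hsq : Squarefree t := by
      have hμt : μ t ≠ 0 := by
        intro h
        apply hS0
        simp only [hSdef, ← ht, h]
        push_cast
        ring
      exact ArithmeticFunction.moebius_ne_zero_iff_squarefree.mp hμt
    have hs0t : s0 ∣ t := Nat.gcd_dvd_left _ _
    have hs0M : s0 ∣ M := Nat.gcd_dvd_right _ _
    have hs00 : s0 ≠ 0 := Nat.gcd_ne_zero_left ht0
    have hts : s0 * u = t := Nat.mul_div_cancel' hs0t
    have hu0 : u ≠ 0 := by intro h; rw [h, mul_zero] at hts; exact ht0 hts.symm
    have hut : u ∣ t := ⟨s0, by rw [← hts]; ring⟩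
    have hcu : Nat.Coprime u M := by
      have hgu : Nat.gcd u M ∣ s0 :=
        Nat.dvd_gcd ((Nat.gcd_dvd_left u M).trans hut) (Nat.gcd_dvd_right u M)
      have h2 : Nat.gcd u M * Nat.gcd u M ∣ t := by
        rw [← hts]; exact mul_dvd_mul hgu (Nat.gcd_dvd_left u M)
      exact Nat.isUnit_iff.mp (hsq _ h2)
    have hMds0 : M ∣ d * s0 := by
      refine Nat.Coprime.dvd_of_dvd_mul_right (Nat.Coprime.symm hcu) ?_
      rw [mul_assoc, hts, hdt]; exact hMn
    have heM : e ∣ M := Nat.div_dvd_of_dvd hs0M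
    have hes0 : e * s0 = M := Nat.div_mul_cancel hs0M
    have he0 : e ≠ 0 := by intro h; rw [h, zero_mul] at hes0; exact hM hes0.symm
    have hed : e ∣ d :=
      (Nat.mul_dvd_mul_iff_right (Nat.pos_of_ne_zero hs00)).mp (by rw [hes0]; exact hMds0)
    have hex : e ∣ x := hed.trans hdx
    have hun : u ∣ n := hut.trans ⟨d, by rw [← hdt]; ring⟩
    have hnu : n / u = d * s0 := by
      have h3 : n = u * (d * s0) := by rw [← hdt, ← hts]; ring
      rw [h3, Nat.mul_div_cancel_left _ (Nat.pos_of_ne_zero hu0)]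
    have hMnu : M ∣ n / u := by rw [hnu]; exact hMds0
    have hnuM : (n / u) / M = d / e := by
      rw [hnu, ← hes0]
      exact Nat.mul_div_mul_right _ _ (Nat.pos_of_ne_zero hs00)
    have hede : e * (d / e) = d := Nat.mul_div_cancel' hed
    exact ⟨Nat.mul_div_cancel' hun, hu0, hcu, he0, heM, hex, hMnu,
      by rw [hnuM, hede]⟩
  refine Finset.sum_nbij'
    (fun σ => σ.2 * (σ.1.2 / M))
    (fun d => ⟨(n / d / Nat.gcd (n / d) M, n / (n / d / Nat.gcd (n / d) M)),
      M / Nat.gcd (n / d) M⟩) ?_ ?_ ?_ ?_ ?_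
  · -- hi : forward membership
    intro σ hσ
    obtain ⟨hmem, hT0⟩ := Finset.mem_filter.mp hσ
    obtain ⟨hij, hi0, hci, he0, heM, hex, hMj, hedx⟩ := sigFacts σ hσ
    have hdj : σ.2 * (σ.1.2 / M) ∣ σ.1.2 := by
      have h1 : σ.2 * (σ.1.2 / M) ∣ M * (σ.1.2 / M) := mul_dvd_mul_right heM _
      rwa [Nat.mul_div_cancel' hMj] at h1
    have hdn : σ.2 * (σ.1.2 / M) ∣ n := hdj.trans ⟨σ.1.1, by rw [← hij]; ring⟩
    refine Finset.mem_filter.mpr ⟨Nat.mem_divisors.mpr ⟨Nat.dvd_gcd hdn hedx,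
      Nat.gcd_ne_zero_left hn⟩, ?_⟩
    have := Heq σ.1.1 σ.1.2 σ.2 hij hi0 hci he0 heM hMj
    rw [← this]
    simpa using hT0
  · -- hj : backward membership
    intro d hd
    obtain ⟨hun, hu0, hcu, he0, heM, hex, hMnu, hprod⟩ := dFacts d hd
    obtain ⟨hmem, hS0⟩ := Finset.mem_filter.mp hd
    refine Finset.mem_filter.mpr ⟨Finset.mem_sigma.mpr ⟨Nat.mem_divisorsAntidiagonal.mpr
      ⟨hun, hn⟩, Finset.mem_filter.mpr ⟨Nat.mem_divisors.mpr ⟨Nat.dvd_gcd heM hex,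
        Nat.gcd_ne_zero_left hM⟩, hMnu, by rw [hprod]; exact
          (Nat.mem_divisors.mp hmem).1.trans (Nat.gcd_dvd_right n x)⟩⟩, ?_⟩
    have heq := Heq _ _ _ hun hu0 hcu he0 heM hMnu
    rw [heq, hprod]
    exact hS0
  · -- left_inv
    rintro ⟨⟨i, j⟩, e⟩ hσ
    obtain ⟨hij, hi0, hci, he0, heM, hex, hMj, hedx⟩ := sigFacts _ hσ
    simp only at hij hi0 hci he0 heM hex hMj hedx
    have hj0 : j ≠ 0 := by rintro rfl; rw [mul_zero] at hij; exact hn hij.symm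
    have hjM : M * (j / M) = j := Nat.mul_div_cancel' hMj
    have heM' : e * (M / e) = M := Nat.mul_div_cancel' heM
    have hMe0 : M / e ≠ 0 := by
      intro h; rw [h, mul_zero] at heM'; exact hM heM'.symm
    have hd0 : e * (j / M) ≠ 0 := by
      have hjM0 : j / M ≠ 0 := by
        intro h; rw [h, mul_zero] at hjM; exact hj0 hjM.symm
      positivity
    have hne : n = (e * (j / M)) * (i * (M / e)) := by
      rw [← hij]
      calc i * j = i * (M * (j / M)) := by rw [hjM]
        _ = i * ((e * (M / e)) * (j / M)) := by rw [heM']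
        _ = (e * (j / M)) * (i * (M / e)) := by ring
    have hnd : n / (e * (j / M)) = i * (M / e) := by
      rw [hne, Nat.mul_div_cancel_left _ (Nat.pos_of_ne_zero hd0)]
    have hgcd : Nat.gcd (i * (M / e)) M = M / e := by
      rw [Nat.Coprime.gcd_mul_left_cancel _ hci,
        Nat.gcd_eq_left (Nat.div_dvd_of_dvd heM)]
    have h4 : i * (M / e) / (M / e) = i := Nat.mul_div_cancel _ (Nat.pos_of_ne_zero hMe0)
    have h5 : n / i = j := by rw [← hij, Nat.mul_div_cancel_left _ (Nat.pos_of_ne_zero hi0)]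
    have h6 : M / (M / e) = e := Nat.div_div_self heM hM
    simp only [hnd, hgcd, h4, h5, h6]
  · -- right_inv
    intro d hd
    obtain ⟨-, -, -, -, -, -, -, hprod⟩ := dFacts d hd
    exact hprod
  · -- term equality
    intro σ hσ
    obtain ⟨hij, hi0, hci, he0, heM, hex, hMj, hedx⟩ := sigFacts σ hσ
    exact Heq σ.1.1 σ.1.2 σ.2 hij hi0 hci he0 heM hMj

lemma Lr_eq (ψ : ℕ → ℂ) (hψm : ∀ m n : ℕ, ψ (m * n) = ψ m * ψ n)
    (M x : ℕ) (hM : M ≠ 0) (hx : x ≠ 0) :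
    LSeries (rr ψ M x) 0 = ψ M * (M : ℂ) * ∑ e ∈ (Nat.gcd M x).divisors,
      ((ArithmeticFunction.moebius (M / e) : ℤ) : ℂ) * ((e : ℂ) / (M : ℂ)) *
        ∑ d ∈ (x / e).divisors, ψ d * (d : ℂ) := by
  classical
  rw [LSeries_at_zero _ (rr_zero ψ M x hx), tsum_eq_sum (rr_support ψ M x hM hx),
    Finset.sum_image (fun a _ b _ h => Nat.eq_of_mul_eq_mul_left (Nat.pos_of_ne_zero hM) h)]
  have hstep : ∀ c ∈ x.divisors, rr ψ M x (M * c) =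
      ∑ e ∈ (Nat.gcd M x).divisors, (if e * c ∣ x then
        ψ M * ψ c * (c : ℂ) * (e : ℂ) * ((ArithmeticFunction.moebius (M / e) : ℤ) : ℂ)
        else 0) := by
    intro c _
    rw [rr, Finset.sum_filter]
    refine Finset.sum_congr rfl fun e _ => ?_
    have hMc : (M * c) / M = c := Nat.mul_div_cancel_left _ (Nat.pos_of_ne_zero hM)
    simp only [hMc, dvd_mul_right, true_and, hψm M c]
  rw [Finset.sum_congr rfl hstep, Finset.sum_comm, Finset.mul_sum]
  refine Finset.sum_congr rfl fun e he => ?_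
  have hegcd : e ∣ Nat.gcd M x := (Nat.mem_divisors.mp he).1
  have hex : e ∣ x := hegcd.trans (Nat.gcd_dvd_right M x)
  have he0 : e ≠ 0 := (Nat.pos_of_mem_divisors he).ne'
  have hxe0 : x / e ≠ 0 :=
    (Nat.div_pos (Nat.le_of_dvd (Nat.pos_of_ne_zero hx) hex) (Nat.pos_of_ne_zero he0)).ne'
  have hset : x.divisors.filter (fun c => e * c ∣ x) = (x / e).divisors := by
    ext c
    simp only [Finset.mem_filter, Nat.mem_divisors]
    constructor
    · rintro ⟨⟨-, -⟩, hecx⟩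
      exact ⟨(Nat.dvd_div_iff_mul_dvd hex).mpr hecx, hxe0⟩
    · rintro ⟨hcxe, -⟩
      have hecx : e * c ∣ x := (Nat.dvd_div_iff_mul_dvd hex).mp hcxe
      exact ⟨⟨(dvd_mul_left c e).trans hecx, hx⟩, hecx⟩
  rw [← Finset.sum_filter, hset]
  have hMne : (M : ℂ) ≠ 0 := Nat.cast_ne_zero.mpr hM
  calc ∑ c ∈ (x / e).divisors,
        ψ M * ψ c * (c : ℂ) * (e : ℂ) * ((ArithmeticFunction.moebius (M / e) : ℤ) : ℂ)
      = ∑ c ∈ (x / e).divisors,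
        (ψ M * (e : ℂ) * ((ArithmeticFunction.moebius (M / e) : ℤ) : ℂ)) * (ψ c * (c : ℂ)) := by
        refine Finset.sum_congr rfl fun c _ => by ring
    _ = (ψ M * (e : ℂ) * ((ArithmeticFunction.moebius (M / e) : ℤ) : ℂ)) *
        ∑ c ∈ (x / e).divisors, ψ c * (c : ℂ) := by rw [Finset.mul_sum]
    _ = ψ M * (M : ℂ) * (((ArithmeticFunction.moebius (M / e) : ℤ) : ℂ) * ((e : ℂ) / (M : ℂ)) *
        ∑ c ∈ (x / e).divisors, ψ c * (c : ℂ)) := by field_simp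


lemma aa_zero (ψ : ℕ → ℂ) (M x : ℕ) : aa ψ M x 0 = 0 := by simp [aa]

end Stmt3

open Stmt3 in
/-- For a completely multiplicative `ψ : ℕ → ℂ` with absolutely convergent sum,
a positive integer `M` and a nonzero integer `x₂`:
`∑_{M ∣ c} ψ(c) ∑_{d ∣ gcd(c,x₂)} d μ(c/d)
  = (ψ(M)·M / L^M(ψ)) ∑_{e ∣ gcd(M,x₂)} μ(M/e) (e/M) σ_{ψ·id}(x₂/e)`,
where `L^M(ψ) = ∑_{(n,M)=1} ψ(n)` and `σ_{ψ·id}(t) = ∑_{d ∣ t} ψ(d) d`. -/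
theorem stmt_3 (ψ : ℕ → ℂ) (hψ1 : ψ 1 = 1)
    (hψm : ∀ m n : ℕ, ψ (m * n) = ψ m * ψ n)
    (habs : Summable fun n : ℕ => ‖ψ n‖)
    (M : ℕ) (hM : 0 < M) (x₂ : ℤ) (hx₂ : x₂ ≠ 0) :
    (∑' j : ℕ, ψ (M * (j + 1)) *
        ∑ d ∈ (Nat.gcd (M * (j + 1)) x₂.natAbs).divisors,
          (d : ℂ) * ((ArithmeticFunction.moebius ((M * (j + 1)) / d) : ℤ) : ℂ))
      = ψ M * (M : ℂ) / (∑' n : ℕ, if Nat.Coprime (n + 1) M then ψ (n + 1) else 0) *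
        ∑ e ∈ (Nat.gcd M x₂.natAbs).divisors,
          ((ArithmeticFunction.moebius (M / e) : ℤ) : ℂ) * ((e : ℂ) / (M : ℂ)) *
            ∑ d ∈ (x₂.natAbs / e).divisors, ψ d * (d : ℂ) := by
  classical
  set x := x₂.natAbs with hxdef
  have hx : x ≠ 0 := Int.natAbs_ne_zero.mpr hx₂
  have hM0 : M ≠ 0 := hM.ne'
  have hbS := LSeriesSummable_bb ψ habs M
  have hgS := LSeriesSummable_gg ψ habs M
  have hrS := LSeriesSummable_rr ψ M x hM0 hx
  have h1 : LSeries (bb ψ M) 0 * LSeries (gg ψ M) 0 = 1 := by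
    rw [← LSeries_convolution' hbS hgS, bg_delta ψ hψ1 hψm M, LSeries_delta, Pi.one_apply]
  have hg0 : LSeries (gg ψ M) 0 ≠ 0 := by
    intro h
    rw [h, mul_zero] at h1
    exact one_ne_zero h1.symm
  have h2 : LSeries (aa ψ M x) 0 = LSeries (bb ψ M) 0 * LSeries (rr ψ M x) 0 := by
    rw [← br_aa ψ hψm M x hM0 hx]
    exact LSeries_convolution' hbS hrS
  have hLg : LSeries (gg ψ M) 0
      = ∑' n : ℕ, if Nat.Coprime (n + 1) M then ψ (n + 1) else 0 := by
    have hsum : Summable (gg ψ M) := (summable_norm_gg ψ habs M).of_norm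
    rw [LSeries_at_zero _ (gg_zero ψ M), Summable.tsum_eq_zero_add hsum, gg_zero ψ M, zero_add]
    exact tsum_congr fun n => by simp [gg]
  have hLa : (∑' j : ℕ, ψ (M * (j + 1)) *
        ∑ d ∈ (Nat.gcd (M * (j + 1)) x).divisors,
          (d : ℂ) * ((ArithmeticFunction.moebius ((M * (j + 1)) / d) : ℤ) : ℂ))
      = LSeries (aa ψ M x) 0 := by
    rw [LSeries_at_zero _ (aa_zero ψ M x)]
    have hinj : Function.Injective (fun j : ℕ => M * (j + 1)) := by
      intro a b h
      simp only at h
      have := Nat.eq_of_mul_eq_mul_left hM h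
      omega
    rw [← Function.Injective.tsum_eq hinj (f := aa ψ M x) ?_]
    · refine tsum_congr fun j => ?_
      have hpos : M * (j + 1) ≠ 0 := by positivity
      rw [show aa ψ M x (M * (j + 1)) = ψ (M * (j + 1)) *
          ∑ d ∈ (Nat.gcd (M * (j + 1)) x).divisors,
            (d : ℂ) * ((ArithmeticFunction.moebius ((M * (j + 1)) / d) : ℤ) : ℂ)
        from by simp only [aa, if_pos (And.intro (dvd_mul_right M (j + 1)) hpos)]]
    · intro m hm
      have hm' : M ∣ m ∧ m ≠ 0 := by
        by_contra hc
        exact hm (by simp [aa, hc] : aa ψ M x m = 0)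
      obtain ⟨⟨k, rfl⟩, hk0⟩ := hm'
      have hk : k ≠ 0 := by rintro rfl; exact hk0 (mul_zero M)
      exact ⟨k - 1, by simp; omega⟩
  rw [hLa, h2, ← hLg, Lr_eq ψ hψm M x hM0 hx]
  set S := ∑ e ∈ (Nat.gcd M x).divisors,
      ((ArithmeticFunction.moebius (M / e) : ℤ) : ℂ) * ((e : ℂ) / (M : ℂ)) *
        ∑ d ∈ (x / e).divisors, ψ d * (d : ℂ) with hSdef
  field_simp
  linear_combination ψ M * S * h1
end

section
/- Let ε be a primitive Dirichlet character of conductor D with an L-function functional equation L(ε, 0) = (πi)^{-1} τ(ε) L(conj(ε), 1), valid when ε is odd (ε(-1) = -1). Formally: if ε is a primitive odd Dirichlet character of conductor D, then π i · L(ε, 0) = τ(ε) · L(conj(ε), 1). -/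
/-!
For an odd character the archimedean factor of the completed L-function is `Γℝ(s + 1)`, which
is `1` at `s = 0` and `π⁻¹` at `s = 1`. The functional equation
`Λ(χ, 0) = N ^ (1/2) · w(χ) · Λ(χ⁻¹, 1)`, with root number `w(χ) = τ(χ) / (i √N)`, therefore
reads `L(χ, 0) = τ(χ) L(χ⁻¹, 1) / (π i)`; and `conj ∘ χ = χ⁻¹` since `χ` takes values in the
unit circle.
-/

open Complex Finset

lemma Complex.Gammaℝ_two : Gammaℝ 2 = (Real.pi : ℂ)⁻¹ := by
  rw [Gammaℝ_def, neg_div, div_self two_ne_zero, Gamma_one, mul_one, cpow_neg_one]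

lemma MulChar.gaussSum_eq_sum_units {R R' : Type*} [CommRing R] [Fintype R] [Fintype Rˣ]
    [CommRing R'] (χ : MulChar R R') (ψ : AddChar R R') :
    gaussSum χ ψ = ∑ a : Rˣ, χ a * ψ a :=
  (Fintype.sum_of_injective _ Units.val_injective _ _
    (fun a ha ↦ by rw [χ.map_nonunit fun hu ↦ ha ⟨hu.unit, rfl⟩, zero_mul]) fun _ ↦ rfl).symm

namespace DirichletCharacter

variable {N : ℕ}

lemma Odd.inv {S : Type*} [CommRing S] {χ : DirichletCharacter S N} (hχ : χ.Odd) :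
    χ⁻¹.Odd := by
  rw [Odd, MulChar.inv_apply_eq_inv, hχ]
  simpa using Ring.inverse_unit (-1 : Sˣ)

lemma ringHomComp_starRingEnd (χ : DirichletCharacter ℂ N) :
    χ.ringHomComp (starRingEnd ℂ) = χ⁻¹ :=
  MulChar.star_eq_inv χ

variable [NeZero N]

lemma gaussSum_stdAddChar_eq_sum_units (χ : DirichletCharacter ℂ N) :
    gaussSum χ ZMod.stdAddChar
      = ∑ a : (ZMod N)ˣ, χ a * exp (2 * Real.pi * I * (a : ZMod N).val / N) := by
  simp only [MulChar.gaussSum_eq_sum_units, ZMod.stdAddChar_apply, ZMod.toCircle_apply]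

variable {χ : DirichletCharacter ℂ N}

lemma Odd.LFunction_zero (hχ : χ.Odd) : LFunction χ 0 = completedLFunction χ 0 := by
  rw [LFunction, completedLFunction, ZMod.LFunction_eq_completed_div_gammaFactor_odd hχ.to_fun,
    zero_add, Gammaℝ_one, div_one]

lemma Odd.completedLFunction_one (hχ : χ.Odd) :
    completedLFunction χ 1 = LFunction χ 1 / Real.pi := by
  rw [LFunction_eq_completed_div_gammaFactor χ 1 (.inl one_ne_zero), hχ.gammaFactor_def,
    one_add_one_eq_two, Gammaℝ_two, div_inv_eq_mul, mul_div_cancel_right₀]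
  exact ofReal_ne_zero.mpr Real.pi_ne_zero

lemma Odd.rootNumber_eq (hχ : χ.Odd) :
    rootNumber χ = gaussSum χ ZMod.stdAddChar / I / (N : ℂ) ^ (1 / 2 : ℂ) := by
  rw [rootNumber, if_neg hχ.not_even, pow_one]

theorem IsPrimitive.LFunction_zero_of_odd (hprim : χ.IsPrimitive) (hχ : χ.Odd) :
    Real.pi * I * LFunction χ 0 = gaussSum χ ZMod.stdAddChar * LFunction χ⁻¹ 1 := by
  have hfe := hprim.completedLFunction_one_sub 1
  rw [sub_self, show (1 : ℂ) - 1 / 2 = 1 / 2 by norm_num] at hfe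
  have hN : (N : ℂ) ^ (1 / 2 : ℂ) ≠ 0 := by simp [NeZero.ne]
  rw [hχ.LFunction_zero, hfe, hχ.rootNumber_eq, hχ.inv.completedLFunction_one]
  field_simp

end DirichletCharacter

/-- For a primitive odd Dirichlet character `ε` of conductor `D`:
`π i · L(ε, 0) = τ(ε) · L(conj ε, 1)`. -/
theorem stmt_9 (D : ℕ) [NeZero D] (ε : DirichletCharacter ℂ D)
    (hprim : ε.IsPrimitive) (hodd : ε (-1) = -1) :
    (Real.pi : ℂ) * Complex.I * DirichletCharacter.LFunction ε 0
      = (∑ a : (ZMod D)ˣ, ε (a : ZMod D) *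
            Complex.exp (2 * (Real.pi : ℂ) * Complex.I *
              (((a : ZMod D).val : ℕ) : ℂ) / (D : ℂ))) *
          DirichletCharacter.LFunction (ε.ringHomComp (starRingEnd ℂ)) 1 := by
  rw [← DirichletCharacter.gaussSum_stdAddChar_eq_sum_units,
    DirichletCharacter.ringHomComp_starRingEnd]
  exact hprim.LFunction_zero_of_odd hodd
end

section
/- For the weight-k Bessel/Mellin integrand G_k(w) = Γ((k-1)/2 + w)/Γ((k-1)/2 + 1 - w), the function w ↦ G_k(w)/G_l(s + w) = [Γ((k-1)/2 + w) Γ((l-1)/2 + 1 - s - w)] / [Γ((k-1)/2 + 1 - w) Γ((l-1)/2 + s + w)] is holomorphic in the half-plane Re(w) ≤ -(k-1)/2 + ε₀ for small ε₀ > 0, provided k > l, 2s is an integer with the same parity as k ± l, and 1 - (k-l)/2 ≤ s ≤ (k-l)/2. In particular, under these hypotheses every pole of Γ((k-1)/2 + w) in that half-plane is cancelled by a pole of Γ((l-1)/2 + s + w). -/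
open Complex Finset

lemma my_Gamma_add_nat (z : ℂ) (hz : ∀ m : ℕ, z ≠ -m) (d : ℕ) :
    Complex.Gamma (z + d) = (∏ j ∈ range d, (z + j)) * Complex.Gamma z := by
  induction d with
  | zero => simp
  | succ d ih =>
    have hzd : z + d ≠ 0 := by
      intro h
      exact hz d (by linear_combination h)
    have : z + (d + 1 : ℕ) = (z + d) + 1 := by push_cast; ring
    rw [this, Complex.Gamma_add_one _ hzd, ih, prod_range_succ]
    ring

lemma re_pos_ne_neg_nat {z : ℂ} (hz : 0 < z.re) : ∀ m : ℕ, z ≠ -m := by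
  intro m h
  rw [h, Complex.neg_re, Complex.natCast_re] at hz
  have : (0 : ℝ) ≤ (m : ℝ) := Nat.cast_nonneg m
  linarith

/-- Under the conditions `k > l`, `2s ∈ ℤ` of the same parity as `k ± l`, and
`1 - (k-l)/2 ≤ s ≤ (k-l)/2`, every pole of `Γ((k-1)/2 + w)` in the half-plane
`Re(w) ≤ -(k-1)/2 + ε₀` is cancelled by a pole of `Γ((l-1)/2 + s + w)`, and the
quotient `Γ((k-1)/2+w)Γ((l-1)/2+1-s-w)/(Γ((k-1)/2+1-w)Γ((l-1)/2+s+w))` is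
holomorphic on that half-plane (for some small `ε₀ > 0`). -/
theorem stmt_18 (k l : ℕ) (hl : 0 < l) (hkl : l < k) (s : ℂ)
    (hs_int : ∃ n : ℤ, 2 * s = (n : ℂ) ∧ n % 2 = ((k : ℤ) + l) % 2)
    (hs_lb : 1 - ((k : ℝ) - l) / 2 ≤ s.re) (hs_ub : s.re ≤ ((k : ℝ) - l) / 2) :
    (∀ n : ℕ, ∃ n' : ℕ,
        -(((k : ℂ) - 1) / 2) - (n : ℂ) = -(((l : ℂ) - 1) / 2) - s - (n' : ℂ)) ∧
    ∃ ε₀ : ℝ, 0 < ε₀ ∧ ∃ F : ℂ → ℂ,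
      DifferentiableOn ℂ F {w : ℂ | w.re ≤ -(((k : ℝ) - 1) / 2) + ε₀} ∧
      ∀ w : ℂ, w.re ≤ -(((k : ℝ) - 1) / 2) + ε₀ →
        (∀ n : ℕ, w ≠ -(((k : ℂ) - 1) / 2) - (n : ℂ)) →
        F w = Complex.Gamma (((k : ℂ) - 1) / 2 + w) *
            Complex.Gamma (((l : ℂ) - 1) / 2 + 1 - s - w) /
            (Complex.Gamma (((k : ℂ) - 1) / 2 + 1 - w) *
              Complex.Gamma (((l : ℂ) - 1) / 2 + s + w)) := by
  obtain ⟨m, hm, hmpar⟩ := hs_int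
  have hsre : s.re = (m : ℝ) / 2 := by
    have h2 : s = (((m : ℝ) / 2 : ℝ) : ℂ) := by
      push_cast
      linear_combination hm / 2
    rw [h2, Complex.ofReal_re]
  have hmle : m ≤ (k : ℤ) - l := by
    rw [hsre] at hs_ub
    have : (m : ℝ) ≤ (k : ℝ) - l := by linarith
    exact_mod_cast this
  set e : ℤ := ((k : ℤ) - l - m) / 2 with he
  have h2e : 2 * e = (k : ℤ) - l - m := by omega
  have hepos : 0 ≤ e := by omega
  set d : ℕ := e.toNat with hd
  have hdz : (d : ℤ) = e := Int.toNat_of_nonneg hepos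
  have hd2 : (d : ℂ) * 2 = (k : ℂ) - l - m := by
    have h := congrArg (fun t : ℤ => ((t : ℂ))) (hdz.symm ▸ h2e.symm ▸ rfl : (2 : ℤ) * d = (k : ℤ) - l - m)
    push_cast at h
    linear_combination h
  constructor
  · intro n
    exact ⟨n + d, by push_cast; linear_combination (hm + hd2) / 2⟩
  refine ⟨1/2, by norm_num, fun w =>
    (∏ j ∈ range d, (((l : ℂ) - 1) / 2 + s + w + j)) *
      Complex.Gamma (((l : ℂ) - 1) / 2 + 1 - s - w) /
      Complex.Gamma (((k : ℂ) - 1) / 2 + 1 - w), ?_, ?_⟩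
  · apply DifferentiableOn.mono (t := {w : ℂ | w.re < -(((k : ℝ) - 1) / 2) + 1})
    swap
    · intro w hw
      simp only [Set.mem_setOf_eq] at hw ⊢
      linarith
    intro w hw
    simp only [Set.mem_setOf_eq] at hw
    have hk1 : (1 : ℝ) ≤ (k : ℝ) := by exact_mod_cast hkl.le.trans' hl
    have hkre : (0 : ℝ) < (((k : ℂ) - 1) / 2 + 1 - w).re := by
      have : (((k : ℂ) - 1) / 2 + 1 - w).re = ((k : ℝ) - 1) / 2 + 1 - w.re := by
        simp [Complex.sub_re, Complex.add_re, Complex.div_re]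
      rw [this]
      linarith
    have hlre : (0 : ℝ) < (((l : ℂ) - 1) / 2 + 1 - s - w).re := by
      have : (((l : ℂ) - 1) / 2 + 1 - s - w).re = ((l : ℝ) - 1) / 2 + 1 - s.re - w.re := by
        simp [Complex.sub_re, Complex.add_re, Complex.div_re]
      rw [this]
      have hl1 : (1 : ℝ) ≤ (l : ℝ) := by exact_mod_cast hl
      have hk2 : (l : ℝ) < (k : ℝ) := by exact_mod_cast hkl
      linarith
    apply DifferentiableAt.differentiableWithinAt
    apply DifferentiableAt.div
    · apply DifferentiableAt.mul
      · apply DifferentiableAt.fun_finsetProd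
        intro j _
        fun_prop
      · exact (Complex.differentiableAt_Gamma _ (re_pos_ne_neg_nat hlre)).comp w
          (by fun_prop)
    · exact (Complex.differentiableAt_Gamma _ (re_pos_ne_neg_nat hkre)).comp w
        (by fun_prop)
    · exact Complex.Gamma_ne_zero_of_re_pos hkre
  · intro w hw hpole
    have hrel : ((k : ℂ) - 1) / 2 + w = (((l : ℂ) - 1) / 2 + s + w) + d := by
      linear_combination (-hm - hd2) / 2
    have hk1 : (1 : ℝ) ≤ (k : ℝ) := by exact_mod_cast hkl.le.trans' hl
    have hBre : (0 : ℝ) < (((k : ℂ) - 1) / 2 + 1 - w).re := by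
      have : (((k : ℂ) - 1) / 2 + 1 - w).re = ((k : ℝ) - 1) / 2 + 1 - w.re := by
        simp [Complex.sub_re, Complex.add_re, Complex.div_re]
      rw [this]
      linarith
    have hB : Complex.Gamma (((k : ℂ) - 1) / 2 + 1 - w) ≠ 0 :=
      Complex.Gamma_ne_zero_of_re_pos hBre
    by_cases hz : ∀ m : ℕ, ((l : ℂ) - 1) / 2 + s + w ≠ -m
    · rw [hrel, my_Gamma_add_nat _ hz d]
      have hGz : Complex.Gamma (((l : ℂ) - 1) / 2 + s + w) ≠ 0 := Complex.Gamma_ne_zero hz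
      beta_reduce
      rw [mul_right_comm, mul_div_mul_right _ _ hGz]
    · push_neg at hz
      obtain ⟨μ, hμ⟩ := hz
      have hμd : μ < d := by
        by_contra hge
        push_neg at hge
        apply hpole (μ - d)
        have hcast : ((μ - d : ℕ) : ℂ) = (μ : ℂ) - d := by
          push_cast [Nat.cast_sub hge]; ring
        rw [hcast]
        linear_combination hrel + hμ
      have hP : (∏ j ∈ range d, (((l : ℂ) - 1) / 2 + s + w + j)) = 0 :=
        prod_eq_zero (mem_range.mpr hμd) (by rw [show ((l : ℂ) - 1) / 2 + s + w + μ = -μ + μ from by rw [← hμ]]; ring)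
      have hGz : Complex.Gamma (((l : ℂ) - 1) / 2 + s + w) = 0 := by
        rw [hμ]; exact Complex.Gamma_neg_nat_eq_zero μ
      beta_reduce
      rw [hGz, hP, mul_zero, div_zero, zero_mul, zero_div]
end
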